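/- Let d ≥ 2 and let O be a nontrivial orbifold on ℂP¹ with ramification function ν. The map z ↦ z^d (respectively, z ↦ z^{−d}) is a minimal holomorphic map O → O if and only if there exists n ≥ 2 with gcd(d, n) = 1 such that ν(0) = ν(∞) = n and ν(z) = 1 for all z ∉ {0, ∞}. -/

import Mathlib

open Polynomial OnePoint
open scoped Classical

noncomputable section

namespace GenLattes

/-- Composition of rational functions: `rcomp f g = f ∘ g`. -/
def rcomp (f g : RatFunc ℂ) : RatFunc ℂ :=
  Polynomial.aeval g f.num / Polynomial.aeval g f.denom

/-- The degree of a rational function: the maximum of the degrees of its numerator and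
denominator in lowest terms. -/
def rdeg (f : RatFunc ℂ) : ℕ := max f.num.natDegree f.denom.natDegree

/-- Evaluation of a rational function at a finite point, with value in the Riemann
sphere `ℂP¹ = OnePoint ℂ`. -/
def evalF (f : RatFunc ℂ) (z : ℂ) : OnePoint ℂ :=
  if f.denom.eval z = 0 then ∞ else ((f.num.eval z / f.denom.eval z : ℂ) : OnePoint ℂ)

/-- The local degree (local multiplicity) of a rational function at a finite point. -/
def locDegF (f : RatFunc ℂ) (z : ℂ) : ℕ :=
  if f.denom.eval z = 0 then rootMultiplicity z f.denom
  else rootMultiplicity z (f.num - Polynomial.C (f.num.eval z / f.denom.eval z) * f.denom)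

/-- The rational function `f(1/X)`. -/
def flip (f : RatFunc ℂ) : RatFunc ℂ := rcomp f (RatFunc.X)⁻¹

/-- The self-map of the Riemann sphere `ℂP¹ = OnePoint ℂ` induced by a rational function. -/
def evalOP (f : RatFunc ℂ) (x : OnePoint ℂ) : OnePoint ℂ :=
  OnePoint.rec (evalF (flip f) 0) (fun z => evalF f z) x

/-- The local degree `deg_x f` of a rational function at a point of the Riemann sphere. -/
def locDeg (f : RatFunc ℂ) (x : OnePoint ℂ) : ℕ :=
  OnePoint.rec (locDegF (flip f) 0) (fun z => locDegF f z) x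

/-- The iterate `f^{∘l}` of a rational function (with `riter f 0 = X = id`). -/
def riter (f : RatFunc ℂ) : ℕ → RatFunc ℂ
  | 0 => RatFunc.X
  | l + 1 => rcomp f (riter f l)

/-- An orbifold on the Riemann sphere: a ramification function `ν : ℂP¹ → ℕ` with
`ν(z) ≥ 1` everywhere and `ν(z) = 1` outside a finite set. -/
structure Orbifold where
  nu : OnePoint ℂ → ℕ
  one_le : ∀ z, 1 ≤ nu z
  finite : {z : OnePoint ℂ | nu z ≠ 1}.Finite

/-- A good orbifold: it is forbidden to have exactly one point with `ν > 1`, or exactly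
two such points with different values of `ν`. -/
def Orbifold.Good (O : Orbifold) : Prop :=
  (¬ ∃ z, {w : OnePoint ℂ | O.nu w ≠ 1} = {z}) ∧
  (¬ ∃ z₁ z₂, z₁ ≠ z₂ ∧ {w : OnePoint ℂ | O.nu w ≠ 1} = {z₁, z₂} ∧ O.nu z₁ ≠ O.nu z₂)

/-- A nontrivial orbifold (distinct from the non-ramified sphere). -/
def Orbifold.IsNontrivial (O : Orbifold) : Prop := ∃ z, 1 < O.nu z

/-- The relation `O₁ ⪯ O₂`: pointwise divisibility of ramification functions. -/
def Orbifold.Prec (O₁ O₂ : Orbifold) : Prop := ∀ z, O₁.nu z ∣ O₂.nu z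

/-- The signature of an orbifold: the multiset of values of `ν` on `c(O) = {ν > 1}`. -/
def Orbifold.signature (O : Orbifold) : Multiset ℕ := O.finite.toFinset.val.map O.nu

/-- The Euler characteristic `χ(O) = 2 + Σ (1/ν(z) - 1)`. -/
def Orbifold.eulerChar (O : Orbifold) : ℚ :=
  2 + ∑ z ∈ O.finite.toFinset, ((O.nu z : ℚ)⁻¹ - 1)

/-- `A : O₁ → O₂` is a holomorphic map between orbifolds:
`ν₂(A(z)) ∣ ν₁(z)·deg_z A` for all `z`. -/
def IsHolo (A : RatFunc ℂ) (O₁ O₂ : Orbifold) : Prop :=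
  ∀ z, O₂.nu (evalOP A z) ∣ O₁.nu z * locDeg A z

/-- `A : O₁ → O₂` is a minimal holomorphic map between orbifolds:
`ν₂(A(z)) = ν₁(z)·gcd(deg_z A, ν₂(A(z)))` for all `z`. -/
def IsMinHolo (A : RatFunc ℂ) (O₁ O₂ : Orbifold) : Prop :=
  ∀ z, O₂.nu (evalOP A z) = O₁.nu z * Nat.gcd (locDeg A z) (O₂.nu (evalOP A z))

/-- `A : O₁ → O₂` is a covering map between orbifolds:
`ν₂(A(z)) = ν₁(z)·deg_z A` for all `z`. -/
def IsCovering (A : RatFunc ℂ) (O₁ O₂ : Orbifold) : Prop :=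
  ∀ z, O₂.nu (evalOP A z) = O₁.nu z * locDeg A z

/-- `A` and `B` are conjugate by a Möbius transformation: `A = μ ∘ B ∘ μ⁻¹`. -/
def Conjugate (A B : RatFunc ℂ) : Prop :=
  ∃ μ ν : RatFunc ℂ, rcomp μ ν = RatFunc.X ∧ rcomp ν μ = RatFunc.X ∧
    A = rcomp (rcomp μ B) ν

/-- The Chebyshev polynomial `T_d` viewed as a rational function. -/
def chebyRF (d : ℕ) : RatFunc ℂ :=
  algebraMap (Polynomial ℂ) (RatFunc ℂ) (Polynomial.Chebyshev.T ℂ d)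

end GenLattes

/-!
Away from `0` and `∞` the maps `z ↦ z^{±d}` are unramified self-maps of `ℂ*`, so
minimality says `ν(A w) = ν w` there. Hence if `ν z ≠ 1` for some `z ∈ ℂ*`, then `ν ≠ 1`
at all `e^k`-th roots of `z` (`e = d`, resp. `e = d²`), which for large `k` are more points
than the finite singular set of `O` contains. At `0` and `∞` the local degree is `d`, and
minimality there amounts to `ν(0), ν(∞)` being coprime to `d`, and equal when `z ↦ z^{-d}`
swaps them; for `z ↦ z^d` their equality comes instead from `O` being good.
-/

theorem Polynomial.card_nthRootsFinset_of_ne_zero {K : Type*} [Field K] [IsAlgClosed K]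
    [CharZero K] {n : ℕ} (hn : n ≠ 0) {a : K} (ha : a ≠ 0) : (nthRootsFinset n a).card = n := by
  have hsep : (X ^ n - C a : K[X]).Separable :=
    separable_X_pow_sub_C a (Nat.cast_ne_zero.2 hn) ha
  have hnodup : (nthRoots n a).Nodup := nodup_roots hsep
  rw [nthRootsFinset_def, Multiset.toFinset_card_of_nodup hnodup, nthRoots,
    splits_iff_card_roots.mp (IsAlgClosed.splits _), natDegree_X_pow_sub_C]

theorem Polynomial.rootMultiplicity_X_pow_sub_C_pow {K : Type*} [Field K] [CharZero K] {d : ℕ}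
    (hd : d ≠ 0) {z : K} (hz : z ≠ 0) : rootMultiplicity z (X ^ d - C (z ^ d)) = 1 := by
  have hsep : (X ^ d - C (z ^ d) : K[X]).Separable :=
    separable_X_pow_sub_C _ (Nat.cast_ne_zero.2 hd) (pow_ne_zero _ hz)
  have hpos : 0 < rootMultiplicity z (X ^ d - C (z ^ d)) :=
    (rootMultiplicity_pos (X_pow_sub_C_ne_zero (Nat.pos_of_ne_zero hd) _)).2 (by simp)
  have := rootMultiplicity_le_one_of_separable hsep z
  omega

theorem Set.Finite.subset_zero_of_pow_mem {K : Type*} [Field K] [IsAlgClosed K] [CharZero K]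
    {s : Set K} (hs : s.Finite) {e : ℕ} (he : 2 ≤ e)
    (hroots : ∀ w, w ≠ 0 → w ^ e ∈ s → w ∈ s) : s ⊆ {0} := by
  intro z hz
  by_contra hz0
  have hiter : ∀ k w, w ^ e ^ k = z → w ∈ s := by
    intro k
    induction k with
    | zero => rintro w rfl; simpa using hz
    | succ k ih =>
      intro w hw
      have hw0 : w ≠ 0 := by
        rintro rfl
        exact hz0 (by rw [← hw, zero_pow (by positivity)]; rfl)
      exact hroots w hw0 (ih _ (by rw [← pow_mul, ← pow_succ', hw]))
  -- there are `e ^ N > N` roots of order `e ^ N` of `z`, with `N = #s`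
  set N := hs.toFinset.card
  have hsub : nthRootsFinset (e ^ N) z ⊆ hs.toFinset := fun w hw =>
    hs.mem_toFinset.2 (hiter N w ((mem_nthRootsFinset (by positivity) z).1 hw))
  have hcard := Finset.card_le_card hsub
  rw [card_nthRootsFinset_of_ne_zero (by positivity) hz0] at hcard
  have : 2 ^ N ≤ e ^ N := Nat.pow_le_pow_left he N
  exact absurd (Nat.lt_two_pow_self (n := N)) (by omega)

theorem Nat.eq_and_coprime_iff_of_eq_mul_gcd {a b d : ℕ} (ha : 0 < a) (hb : 0 < b) :
    b = a * Nat.gcd d b ∧ a = b * Nat.gcd d a ↔ b = a ∧ d.Coprime a := by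
  constructor
  · rintro ⟨hba, hab⟩
    have hle : a ≤ b := hba ▸ Nat.le_mul_of_pos_right a (Nat.gcd_pos_of_pos_right d hb)
    have hge : b ≤ a := hab ▸ Nat.le_mul_of_pos_right b (Nat.gcd_pos_of_pos_right d ha)
    have hab' : b = a := le_antisymm hge hle
    subst hab'
    exact ⟨rfl, (left_eq_mul₀ ha.ne').1 hab⟩
  · rintro ⟨rfl, hcop⟩
    rw [hcop.gcd_eq_one, mul_one]
    exact ⟨rfl, rfl⟩

namespace GenLattes

@[simp] theorem evalOP_coe (f : RatFunc ℂ) (z : ℂ) : evalOP f z = evalF f z := rfl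

@[simp] theorem evalOP_infty (f : RatFunc ℂ) : evalOP f ∞ = evalF (flip f) 0 := rfl

@[simp] theorem locDeg_coe (f : RatFunc ℂ) (z : ℂ) : locDeg f z = locDegF f z := rfl

@[simp] theorem locDeg_infty (f : RatFunc ℂ) : locDeg f ∞ = locDegF (flip f) 0 := rfl

section PowerMap

variable (d : ℕ)

theorem num_X_pow : (RatFunc.X ^ d : RatFunc ℂ).num = X ^ d := by
  rw [← RatFunc.algebraMap_X, ← map_pow, RatFunc.num_algebraMap]

theorem denom_X_pow : (RatFunc.X ^ d : RatFunc ℂ).denom = 1 := by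
  rw [← RatFunc.algebraMap_X, ← map_pow, RatFunc.denom_algebraMap]

theorem num_X_pow_inv : ((RatFunc.X ^ d : RatFunc ℂ)⁻¹).num = 1 := by
  rw [← RatFunc.algebraMap_X, ← map_pow, inv_eq_one_div, ← map_one (algebraMap ℂ[X] _),
    RatFunc.num_div]
  simp

theorem denom_X_pow_inv : ((RatFunc.X ^ d : RatFunc ℂ)⁻¹).denom = X ^ d := by
  rw [← RatFunc.algebraMap_X, ← map_pow, inv_eq_one_div, ← map_one (algebraMap ℂ[X] _),
    RatFunc.denom_div _ (pow_ne_zero d X_ne_zero)]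
  simp

theorem flip_X_pow : flip (RatFunc.X ^ d) = (RatFunc.X ^ d)⁻¹ := by
  simp [flip, rcomp, num_X_pow, denom_X_pow, inv_pow]

theorem flip_X_pow_inv : flip ((RatFunc.X ^ d)⁻¹) = RatFunc.X ^ d := by
  simp [flip, rcomp, num_X_pow_inv, denom_X_pow_inv, inv_pow]

theorem evalOP_X_pow_coe (z : ℂ) : evalOP (RatFunc.X ^ d) z = ↑(z ^ d) := by
  simp [evalF, num_X_pow, denom_X_pow]

theorem evalOP_X_pow_inv_coe {z : ℂ} (hz : z ≠ 0) :
    evalOP ((RatFunc.X ^ d)⁻¹) z = ↑((z ^ d)⁻¹) := by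
  simp [evalF, num_X_pow_inv, denom_X_pow_inv, hz]

variable {d} (hd : d ≠ 0)
include hd

theorem evalOP_X_pow_infty : evalOP (RatFunc.X ^ d) ∞ = ∞ := by
  simp [evalF, flip_X_pow, denom_X_pow_inv, hd]

theorem evalOP_X_pow_inv_zero : evalOP ((RatFunc.X ^ d)⁻¹) (0 : ℂ) = ∞ := by
  simp [evalF, denom_X_pow_inv, hd]

theorem evalOP_X_pow_inv_infty : evalOP ((RatFunc.X ^ d)⁻¹) ∞ = (0 : ℂ) := by
  simp [evalF, flip_X_pow_inv, num_X_pow, denom_X_pow, hd]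

theorem locDeg_X_pow_coe {z : ℂ} (hz : z ≠ 0) : locDeg (RatFunc.X ^ d) z = 1 := by
  simpa [locDegF, num_X_pow, denom_X_pow] using rootMultiplicity_X_pow_sub_C_pow hd hz

theorem locDeg_X_pow_zero : locDeg (RatFunc.X ^ d) (0 : ℂ) = d := by
  simpa [locDegF, num_X_pow, denom_X_pow, hd] using rootMultiplicity_X_sub_C_pow (0 : ℂ) d

theorem locDeg_X_pow_infty : locDeg (RatFunc.X ^ d) ∞ = d := by
  simpa [locDegF, flip_X_pow, denom_X_pow_inv, hd]
    using rootMultiplicity_X_sub_C_pow (0 : ℂ) d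

theorem locDeg_X_pow_inv_coe {z : ℂ} (hz : z ≠ 0) : locDeg ((RatFunc.X ^ d)⁻¹) z = 1 := by
  have hzd : z ^ d ≠ 0 := pow_ne_zero d hz
  have hfactor : (1 - C (1 / z ^ d) * X ^ d : ℂ[X]) = C (-(z ^ d)⁻¹) * (X ^ d - C (z ^ d)) := by
    rw [mul_sub, ← C_mul, neg_mul, inv_mul_cancel₀ hzd, one_div, C_neg, C_neg, C_1]
    ring
  have hne : C (-(z ^ d)⁻¹) * (X ^ d - C (z ^ d)) ≠ 0 :=
    mul_ne_zero (by simpa using hzd) (X_pow_sub_C_ne_zero (Nat.pos_of_ne_zero hd) _)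
  rw [locDeg_coe, locDegF, num_X_pow_inv, denom_X_pow_inv]
  simp only [eval_pow, eval_X, eval_one, hzd, if_false, hfactor]
  rw [rootMultiplicity_mul hne, rootMultiplicity_C, rootMultiplicity_X_pow_sub_C_pow hd hz]

theorem locDeg_X_pow_inv_zero : locDeg ((RatFunc.X ^ d)⁻¹) (0 : ℂ) = d := by
  simpa [locDegF, denom_X_pow_inv, hd] using rootMultiplicity_X_sub_C_pow (0 : ℂ) d

theorem locDeg_X_pow_inv_infty : locDeg ((RatFunc.X ^ d)⁻¹) ∞ = d := by
  simpa [locDegF, flip_X_pow_inv, num_X_pow, denom_X_pow, hd]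
    using rootMultiplicity_X_sub_C_pow (0 : ℂ) d

end PowerMap

theorem Orbifold.nu_pos (O : Orbifold) (z : OnePoint ℂ) : 0 < O.nu z := O.one_le z

theorem Orbifold.nu_eq_nu_mul_gcd_iff (O : Orbifold) (z : OnePoint ℂ) (d : ℕ) :
    O.nu z = O.nu z * Nat.gcd d (O.nu z) ↔ d.Coprime (O.nu z) :=
  left_eq_mul₀ (O.nu_pos z).ne'

theorem isMinHolo_iff_of_locDeg_coe_eq_one {A : RatFunc ℂ} {O₁ O₂ : Orbifold}
    (hA : ∀ w : ℂ, w ≠ 0 → locDeg A w = 1) :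
    IsMinHolo A O₁ O₂ ↔ (∀ w : ℂ, w ≠ 0 → O₂.nu (evalOP A w) = O₁.nu w) ∧
      O₂.nu (evalOP A (0 : ℂ)) =
        O₁.nu (0 : ℂ) * Nat.gcd (locDeg A (0 : ℂ)) (O₂.nu (evalOP A (0 : ℂ))) ∧
      O₂.nu (evalOP A ∞) = O₁.nu ∞ * Nat.gcd (locDeg A ∞) (O₂.nu (evalOP A ∞)) := by
  have hunram : ∀ w : ℂ, w ≠ 0 → (O₂.nu (evalOP A w) =
      O₁.nu w * Nat.gcd (locDeg A w) (O₂.nu (evalOP A w)) ↔ O₂.nu (evalOP A w) = O₁.nu w) := by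
    intro w hw
    rw [hA w hw, Nat.gcd_one_left, mul_one]
  constructor
  · intro h
    exact ⟨fun w hw => (hunram w hw).1 (h w), h (0 : ℂ), h ∞⟩
  · rintro ⟨hcoe, hzero, hinfty⟩ z
    induction z using OnePoint.rec with
    | infty => exact hinfty
    | coe w =>
      rcases eq_or_ne w 0 with rfl | hw
      · exact hzero
      · exact (hunram w hw).2 (hcoe w hw)

theorem isMinHolo_X_pow_iff {d : ℕ} (hd : d ≠ 0) (O : Orbifold) :
    IsMinHolo (RatFunc.X ^ d) O O ↔ (∀ w : ℂ, w ≠ 0 → O.nu ↑(w ^ d) = O.nu w) ∧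
      d.Coprime (O.nu (0 : ℂ)) ∧ d.Coprime (O.nu ∞) := by
  rw [isMinHolo_iff_of_locDeg_coe_eq_one fun w hw => locDeg_X_pow_coe hd hw]
  simp only [evalOP_X_pow_coe, zero_pow hd, locDeg_X_pow_zero hd, evalOP_X_pow_infty hd,
    locDeg_X_pow_infty hd, O.nu_eq_nu_mul_gcd_iff]

theorem isMinHolo_X_pow_inv_iff {d : ℕ} (hd : d ≠ 0) (O : Orbifold) :
    IsMinHolo ((RatFunc.X ^ d)⁻¹) O O ↔ (∀ w : ℂ, w ≠ 0 → O.nu ↑((w ^ d)⁻¹) = O.nu w) ∧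
      O.nu ∞ = O.nu (0 : ℂ) ∧ d.Coprime (O.nu (0 : ℂ)) := by
  rw [isMinHolo_iff_of_locDeg_coe_eq_one fun w hw => locDeg_X_pow_inv_coe hd hw,
    evalOP_X_pow_inv_zero hd, locDeg_X_pow_inv_zero hd, evalOP_X_pow_inv_infty hd,
    locDeg_X_pow_inv_infty hd, Nat.eq_and_coprime_iff_of_eq_mul_gcd (O.nu_pos _) (O.nu_pos _)]
  refine and_congr_left' (forall₂_congr fun w hw => ?_)
  rw [evalOP_X_pow_inv_coe d hw]

theorem Orbifold.nu_coe_eq_one_of_nu_pow_eq (O : Orbifold) {e : ℕ} (he : 2 ≤ e)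
    (h : ∀ w : ℂ, w ≠ 0 → O.nu ↑(w ^ e) = O.nu w) (z : ℂ) (hz : z ≠ 0) : O.nu z = 1 := by
  have hfin : {w : ℂ | O.nu w ≠ 1}.Finite :=
    O.finite.preimage OnePoint.coe_injective.injOn
  have hroots : ∀ w, w ≠ 0 → w ^ e ∈ {w : ℂ | O.nu w ≠ 1} → w ∈ {w : ℂ | O.nu w ≠ 1} :=
    fun w hw hmem => by rwa [Set.mem_ofPred_eq, ← h w hw]
  by_contra hne
  exact hz (hfin.subset_zero_of_pow_mem he hroots hne)

theorem Orbifold.Good.nu_eq_of_subset_pair {O : Orbifold} (hO : O.Good) {a b : OnePoint ℂ}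
    (hab : a ≠ b) (h : {w | O.nu w ≠ 1} ⊆ {a, b}) : O.nu a = O.nu b := by
  rcases Set.subset_pair_iff_eq.1 h with hS | hS | hS | hS
  · rw [Set.eq_empty_iff_forall_notMem] at hS
    rw [not_not.1 (hS a), not_not.1 (hS b)]
  · exact absurd ⟨a, hS⟩ hO.1
  · exact absurd ⟨b, hS⟩ hO.1
  · by_contra hne
    exact hO.2 ⟨a, b, hab, hS, hne⟩

theorem Orbifold.Good.nu_zero_eq_nu_infty {O : Orbifold} (hO : O.Good)
    (h : ∀ w : ℂ, w ≠ 0 → O.nu w = 1) : O.nu (0 : ℂ) = O.nu ∞ := by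
  refine hO.nu_eq_of_subset_pair (OnePoint.coe_ne_infty 0) fun z hz => ?_
  induction z using OnePoint.rec with
  | infty => exact Or.inr rfl
  | coe w =>
    by_contra hw
    exact hz (h w fun hw0 => hw (Or.inl (by rw [hw0])))

theorem Orbifold.IsNontrivial.exists_two_le_coprime_iff {O : Orbifold} (hnt : O.IsNontrivial)
    (d : ℕ) :
    (∃ n : ℕ, 2 ≤ n ∧ Nat.gcd d n = 1 ∧
        O.nu ((0 : ℂ) : OnePoint ℂ) = n ∧ O.nu ∞ = n ∧
        ∀ z : OnePoint ℂ, z ≠ ((0 : ℂ) : OnePoint ℂ) → z ≠ ∞ → O.nu z = 1) ↔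
      (∀ w : ℂ, w ≠ 0 → O.nu w = 1) ∧ O.nu ∞ = O.nu (0 : ℂ) ∧ d.Coprime (O.nu (0 : ℂ)) := by
  constructor
  · rintro ⟨n, -, hcop, h0, hinf, hoff⟩
    exact ⟨fun w hw => hoff w (by simpa using hw) (OnePoint.coe_ne_infty w), hinf.trans h0.symm,
      h0 ▸ hcop⟩
  · rintro ⟨hoff, heq, hcop⟩
    refine ⟨_, ?_, hcop, rfl, heq, fun z hz0 hzinf => ?_⟩
    · obtain ⟨z, hz⟩ := hnt
      induction z using OnePoint.rec with
      | infty => omega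
      | coe w =>
        rcases eq_or_ne w 0 with rfl | hw
        · exact hz
        · exact absurd (hoff w hw) hz.ne'
    · obtain ⟨w, rfl⟩ := OnePoint.ne_infty_iff_exists.1 hzinf
      exact hoff w (by rintro rfl; exact hz0 rfl)

/-- **Theorem (power maps).** For `d ≥ 2` and a nontrivial orbifold `O`, the map
`z ↦ z^d` (resp. `z ↦ z^{-d}`) is a minimal holomorphic self-map of `O` if and only if
`ν(0) = ν(∞) = n` for some `n ≥ 2` coprime with `d`, and `ν(z) = 1` elsewhere. -/
theorem power_map_minimal (d : ℕ) (hd : 2 ≤ d) (O : Orbifold) (hO : O.Good)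
    (hnt : O.IsNontrivial) :
    (IsMinHolo (RatFunc.X ^ d) O O ↔
      ∃ n : ℕ, 2 ≤ n ∧ Nat.gcd d n = 1 ∧
        O.nu ((0 : ℂ) : OnePoint ℂ) = n ∧ O.nu ∞ = n ∧
        ∀ z : OnePoint ℂ, z ≠ ((0 : ℂ) : OnePoint ℂ) → z ≠ ∞ → O.nu z = 1) ∧
    (IsMinHolo ((RatFunc.X ^ d)⁻¹) O O ↔
      ∃ n : ℕ, 2 ≤ n ∧ Nat.gcd d n = 1 ∧
        O.nu ((0 : ℂ) : OnePoint ℂ) = n ∧ O.nu ∞ = n ∧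
        ∀ z : OnePoint ℂ, z ≠ ((0 : ℂ) : OnePoint ℂ) → z ≠ ∞ → O.nu z = 1) := by
  have hd0 : d ≠ 0 := by omega
  rw [isMinHolo_X_pow_iff hd0, isMinHolo_X_pow_inv_iff hd0, hnt.exists_two_le_coprime_iff]
  constructor
  · constructor
    · rintro ⟨hpow, hcop, -⟩
      have hoff := O.nu_coe_eq_one_of_nu_pow_eq hd hpow
      exact ⟨hoff, (hO.nu_zero_eq_nu_infty hoff).symm, hcop⟩
    · rintro ⟨hoff, heq, hcop⟩
      exact ⟨fun w hw => by rw [hoff w hw, hoff _ (pow_ne_zero d hw)], hcop, heq ▸ hcop⟩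
  · refine and_congr_left' ⟨fun hinv => O.nu_coe_eq_one_of_nu_pow_eq (e := d * d)
      (by nlinarith) fun w hw => ?_, fun hoff w hw => ?_⟩
    · -- `z ↦ z^{-d}` composed with itself is `z ↦ z^{d·d}`
      have hinv2 := hinv _ (inv_ne_zero (pow_ne_zero d hw))
      rwa [← inv_pow, inv_inv, ← pow_mul, hinv w hw] at hinv2
    · rw [hoff w hw, hoff _ (inv_ne_zero (pow_ne_zero d hw))]

end GenLattes
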